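/- arXiv:1510.04229 — 2 statements merged into one kernel-verified Lean document; each statement's English description precedes it below -/
import Mathlib

section
/- Let $n \geq 1$ and let $G \subseteq S_n$ act on $A = (\mathbb{C}[t]/(t^2))^{\otimes n}$ (graded with $t$ in degree $2$) by permuting factors. The invariant algebra $A^G$ is isomorphic as a graded $\mathbb{C}$-algebra to $\mathbb{C}[s]/(s^{n+1})$ with $s$ in degree $2$ if and only if $G$ acts transitively on the set of $k$-element subsets of $\{1,\dots,n\}$ for every $1 \leq k \leq n$. -/
/-!
The monomials `t^I` form a basis of `A`, and `s^k = k! • ∑_{|I| = k} t^I`. Hence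
`ℂ[X]/(X^{n+1}) → A`, `X ↦ s`, is injective and its image consists of the elements whose
coefficient at `t^I` depends only on `|I|`. This image always lies in `A^G`, so the required
isomorphism exists iff every `G`-invariant has that property. An element is `G`-invariant iff its
coefficients are constant on `G`-orbits of subsets, and testing on the indicator of an orbit shows
that this forces the orbits to be the whole cardinality classes.
-/

open MvPolynomial

/-- The ideal `(x₁², …, xₙ²)` in `ℂ[x₁,…,xₙ]`. -/
noncomputable def dualIdeal (n : ℕ) : Ideal (MvPolynomial (Fin n) ℂ) :=
  Ideal.span (Set.range fun i => (X i : MvPolynomial (Fin n) ℂ) ^ 2)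

/-- `A n = (ℂ[t]/(t²))^{⊗ n} ≅ ℂ[x₁,…,xₙ]/(x₁²,…,xₙ²)`. -/
noncomputable abbrev DualPow (n : ℕ) : Type := MvPolynomial (Fin n) ℂ ⧸ dualIdeal n

/-- The basis element `t^I` (the class of `∏_{i ∈ I} xᵢ`). -/
noncomputable def tI (n : ℕ) (I : Finset (Fin n)) : DualPow n :=
  Ideal.Quotient.mk (dualIdeal n) (∏ i ∈ I, X i)

/-- `s = ∑ tᵢ`. -/
noncomputable def sElem (n : ℕ) : DualPow n := ∑ i : Fin n, tI n {i}

/-- The action of a permutation on `A n`, permuting the factors. -/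
noncomputable def permAlg (n : ℕ) (σ : Equiv.Perm (Fin n)) : DualPow n →ₐ[ℂ] DualPow n :=
  Ideal.quotientMapₐ (dualIdeal n) (rename (σ : Fin n → Fin n)) (by
    unfold dualIdeal
    rw [Ideal.span_le]
    rintro x ⟨i, rfl⟩
    rw [SetLike.mem_coe, Ideal.mem_comap, map_pow, rename_X]
    exact Ideal.subset_span ⟨σ i, rfl⟩)

/-- The invariant subalgebra `A^G`. -/
noncomputable def invAlg (n : ℕ) (G : Subgroup (Equiv.Perm (Fin n))) : Subalgebra ℂ (DualPow n) :=
  ⨅ σ ∈ G, AlgHom.equalizer (permAlg n σ) (AlgHom.id ℂ (DualPow n))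

/-- The invariant subspace as a submodule. -/
noncomputable def invSub (n : ℕ) (G : Subgroup (Equiv.Perm (Fin n))) : Submodule ℂ (DualPow n) :=
  ⨅ σ ∈ G, LinearMap.eqLocus (permAlg n σ).toLinearMap LinearMap.id

/-- The degree-`d` homogeneous component of `A n` (where `t` has degree `2`):
spanned by the `t^I` with `2 ⬝ |I| = d`. -/
noncomputable def component (n d : ℕ) : Submodule ℂ (DualPow n) :=
  Submodule.span ℂ {x | ∃ I : Finset (Fin n), 2 * I.card = d ∧ x = tI n I}

/-- `ℂ[s]/(s^m)`. -/
noncomputable abbrev PolyQuot (m : ℕ) : Type :=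
  Polynomial ℂ ⧸ Ideal.span {(Polynomial.X : Polynomial ℂ) ^ m}

lemma PolyQuot.algHom_ext {m : ℕ} {B : Type*} [Semiring B] [Algebra ℂ B]
    {f g : PolyQuot m →ₐ[ℂ] B}
    (h : f (Ideal.Quotient.mk _ Polynomial.X) = g (Ideal.Quotient.mk _ Polynomial.X)) : f = g :=
  Ideal.Quotient.algHom_ext ℂ (Polynomial.algHom_ext h)

lemma Fin.exists_finset_card_eq {n k : ℕ} (hk : k ≤ n) : ∃ J : Finset (Fin n), J.card = k := by
  obtain ⟨J, hJ⟩ := Finset.powersetCard_nonempty (s := (Finset.univ : Finset (Fin n))).mpr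
    (by simpa using hk)
  exact ⟨J, Finset.mem_powersetCard_univ.mp hJ⟩

namespace DualPow

variable {n : ℕ}

noncomputable def indicatorExp (I : Finset (Fin n)) : Fin n →₀ ℕ := ∑ i ∈ I, Finsupp.single i 1

lemma indicatorExp_apply (I : Finset (Fin n)) (j : Fin n) :
    indicatorExp I j = if j ∈ I then 1 else 0 := by
  simp [indicatorExp, Finsupp.finsetSum_apply, Finsupp.single_apply]

lemma indicatorExp_injective : Function.Injective (indicatorExp (n := n)) := by
  intro I J h
  ext j
  have hj := DFunLike.congr_fun h j
  simp only [indicatorExp_apply] at hj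
  split_ifs at hj <;> simp_all

lemma prod_X_eq_monomial (I : Finset (Fin n)) :
    ∏ i ∈ I, (X i : MvPolynomial (Fin n) ℂ) = monomial (indicatorExp I) 1 :=
  (monomial_sum_one I _).symm

lemma coeff_indicatorExp_eq_zero {p : MvPolynomial (Fin n) ℂ} (hp : p ∈ dualIdeal n)
    (J : Finset (Fin n)) : coeff (indicatorExp J) p = 0 := by
  obtain ⟨c, rfl⟩ := (Ideal.mem_span_range_iff_exists_fun).mp hp
  refine (coeff_sum _ _ _).trans (Finset.sum_eq_zero fun i _ => ?_)
  rw [X_pow_eq_monomial, coeff_mul_monomial', if_neg]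
  intro h
  have hi := h i
  simp only [Finsupp.single_eq_same, indicatorExp_apply] at hi
  split_ifs at hi <;> omega

/-- The coefficient of `t^J` in the basis `{t^I}` of `A`. -/
noncomputable def coeffAt (J : Finset (Fin n)) : DualPow n →ₗ[ℂ] ℂ :=
  (Submodule.liftQ ((dualIdeal n).restrictScalars ℂ) (lcoeff ℂ (indicatorExp J))
      fun _ hp => coeff_indicatorExp_eq_zero hp J).comp
    (Submodule.Quotient.restrictScalarsEquiv ℂ (dualIdeal n)).symm.toLinearMap

lemma coeffAt_mk (J : Finset (Fin n)) (p : MvPolynomial (Fin n) ℂ) :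
    coeffAt J (Ideal.Quotient.mk (dualIdeal n) p) = coeff (indicatorExp J) p := rfl

lemma coeffAt_tI (J I : Finset (Fin n)) : coeffAt J (tI n I) = if I = J then 1 else 0 := by
  rw [tI, coeffAt_mk, prod_X_eq_monomial, coeff_monomial]
  exact if_congr indicatorExp_injective.eq_iff rfl rfl

lemma mk_monomial_eq_zero {μ : Fin n →₀ ℕ} {i : Fin n} (hi : 2 ≤ μ i) (c : ℂ) :
    Ideal.Quotient.mk (dualIdeal n) (monomial μ c) = 0 := by
  have hle : Finsupp.single i 2 ≤ μ := Finsupp.single_le_iff.mpr hi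
  rw [Ideal.Quotient.eq_zero_iff_mem, ← tsub_add_cancel_of_le hle, ← mul_one c,
    ← monomial_mul, ← X_pow_eq_monomial]
  exact Ideal.mul_mem_left _ _ (Ideal.subset_span ⟨i, rfl⟩)

lemma mk_monomial_eq_smul_tI {μ : Fin n →₀ ℕ} (hμ : ∀ i, μ i ≤ 1) (c : ℂ) :
    Ideal.Quotient.mk (dualIdeal n) (monomial μ c) = c • tI n μ.support := by
  have hμ : μ = indicatorExp μ.support := by
    ext i
    have := hμ i
    rw [indicatorExp_apply]
    split_ifs with h
    · have := Finsupp.mem_support_iff.mp h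
      omega
    · exact Finsupp.notMem_support_iff.mp h
  rw [tI, prod_X_eq_monomial, ← hμ, ← Ideal.Quotient.mkₐ_eq_mk ℂ, ← map_smul, smul_monomial,
    smul_eq_mul, mul_one]

lemma span_range_tI : Submodule.span ℂ (Set.range (tI n)) = ⊤ := by
  refine Submodule.eq_top_iff'.mpr fun x => ?_
  obtain ⟨p, rfl⟩ := Ideal.Quotient.mk_surjective x
  rw [p.as_sum, map_sum]
  refine Submodule.sum_mem _ fun μ _ => ?_
  by_cases hμ : ∀ i, μ i ≤ 1
  · rw [mk_monomial_eq_smul_tI hμ]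
    exact Submodule.smul_mem _ _ (Submodule.subset_span ⟨_, rfl⟩)
  · obtain ⟨i, hi⟩ := not_forall.mp hμ
    rw [mk_monomial_eq_zero (i := i) (by omega)]
    exact Submodule.zero_mem _

noncomputable def ofCoeff (c : Finset (Fin n) → ℂ) : DualPow n := ∑ I, c I • tI n I

lemma coeffAt_ofCoeff (c : Finset (Fin n) → ℂ) (J : Finset (Fin n)) :
    coeffAt J (ofCoeff c) = c J := by
  simp [ofCoeff, coeffAt_tI]

lemma ofCoeff_coeffAt (x : DualPow n) : ofCoeff (fun I => coeffAt I x) = x := by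
  let f : DualPow n →ₗ[ℂ] DualPow n := ∑ I, (coeffAt I).smulRight (tI n I)
  have hf : f = LinearMap.id := LinearMap.ext_on_range span_range_tI fun J => by
    simp [f, coeffAt_tI]
  simpa [f, ofCoeff] using LinearMap.congr_fun hf x

lemma ext_coeffAt {x y : DualPow n} (h : ∀ I, coeffAt I x = coeffAt I y) : x = y := by
  rw [← ofCoeff_coeffAt x, ← ofCoeff_coeffAt y]
  simp only [h]

lemma tI_empty : tI n ∅ = 1 := by
  simp [tI]

lemma tI_singleton_mul (i : Fin n) (I : Finset (Fin n)) :
    tI n {i} * tI n I = if i ∈ I then 0 else tI n (insert i I) := by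
  unfold tI
  rw [← map_mul, Finset.prod_singleton]
  split_ifs with hi
  · rw [Ideal.Quotient.eq_zero_iff_mem, ← Finset.mul_prod_erase I _ hi, ← mul_assoc, ← sq]
    exact Ideal.mul_mem_right _ _ (Ideal.subset_span ⟨i, rfl⟩)
  · rw [Finset.prod_insert hi]

lemma coeffAt_sElem_mul (J : Finset (Fin n)) (x : DualPow n) :
    coeffAt J (sElem n * x) = ∑ i ∈ J, coeffAt (J.erase i) x := by
  have key : (coeffAt J).comp (LinearMap.mulLeft ℂ (sElem n)) = ∑ i ∈ J, coeffAt (J.erase i) :=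
    LinearMap.ext_on_range span_range_tI fun I => by
      have hins : ∀ i, (i ∉ I ∧ insert i I = J) ↔ (i ∈ J ∧ I = J.erase i) := fun i =>
        ⟨fun ⟨hi, h⟩ => ⟨h ▸ Finset.mem_insert_self i I, h ▸ (Finset.erase_insert hi).symm⟩,
          fun ⟨hi, h⟩ => ⟨h ▸ Finset.notMem_erase i J, h ▸ Finset.insert_erase hi⟩⟩
      simp only [LinearMap.comp_apply, LinearMap.mulLeft_apply, LinearMap.sum_apply, sElem,
        Finset.sum_mul, map_sum, tI_singleton_mul]
      rw [← Fintype.sum_extend_by_zero J]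
      refine Finset.sum_congr rfl fun i _ => ?_
      rw [apply_ite (coeffAt J), map_zero, coeffAt_tI, coeffAt_tI, ← ite_not, ← ite_and,
        ← ite_and, if_congr (hins i) rfl rfl]
  simpa using LinearMap.congr_fun key x

lemma coeffAt_sElem_pow (J : Finset (Fin n)) (k : ℕ) :
    coeffAt J (sElem n ^ k) = if J.card = k then (k.factorial : ℂ) else 0 := by
  induction k generalizing J with
  | zero => simpa [tI_empty, Finset.card_eq_zero, eq_comm] using coeffAt_tI J ∅
  | succ k ih =>
    have hcard : ∀ i ∈ J, (J.erase i).card = k ↔ J.card = k + 1 := fun i hi => by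
      rw [Finset.card_erase_of_mem hi]
      have := Finset.card_pos.mpr ⟨i, hi⟩
      omega
    rw [pow_succ', coeffAt_sElem_mul,
      Finset.sum_congr rfl fun i hi => by rw [ih, if_congr (hcard i hi) rfl rfl]]
    split_ifs with h
    · rw [Finset.sum_const, h, nsmul_eq_mul, Nat.factorial_succ]
      push_cast
      ring
    · simp

lemma coeffAt_aeval_sElem (J : Finset (Fin n)) (p : Polynomial ℂ) :
    coeffAt J (Polynomial.aeval (sElem n) p) = p.coeff J.card * J.card.factorial := by
  induction p using Polynomial.induction_on' with
  | add p q hp hq => simp [hp, hq, add_mul]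
  | monomial k a =>
    rw [Polynomial.aeval_monomial, ← Algebra.smul_def, map_smul, coeffAt_sElem_pow,
      Polynomial.coeff_monomial]
    split_ifs <;> simp_all

lemma sElem_pow_succ_eq_zero : sElem n ^ (n + 1) = 0 :=
  ext_coeffAt fun J => by
    have : J.card ≤ n := by simpa using J.card_le_univ
    rw [coeffAt_sElem_pow, if_neg (by omega), map_zero]

noncomputable def sQuotHom (n : ℕ) : PolyQuot (n + 1) →ₐ[ℂ] DualPow n :=
  Ideal.Quotient.liftₐ _ (Polynomial.aeval (sElem n)) fun p hp => by
    obtain ⟨q, rfl⟩ := Ideal.mem_span_singleton'.mp hp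
    rw [map_mul, map_pow, Polynomial.aeval_X, sElem_pow_succ_eq_zero, mul_zero]

lemma sQuotHom_mk (p : Polynomial ℂ) :
    sQuotHom n (Ideal.Quotient.mk _ p) = Polynomial.aeval (sElem n) p := rfl

lemma sQuotHom_injective : Function.Injective (sQuotHom n) := by
  refine (injective_iff_map_eq_zero _).mpr fun a ha => ?_
  obtain ⟨p, rfl⟩ := Ideal.Quotient.mk_surjective a
  refine Ideal.Quotient.eq_zero_iff_mem.mpr <| Ideal.mem_span_singleton.mpr <|
    Polynomial.X_pow_dvd_iff.mpr fun k hk => ?_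
  obtain ⟨J, hJ⟩ := Fin.exists_finset_card_eq (Nat.lt_succ_iff.mp hk)
  have hcoeff := congrArg (coeffAt J) ha
  rw [sQuotHom_mk, coeffAt_aeval_sElem, map_zero, hJ] at hcoeff
  exact (mul_eq_zero.mp hcoeff).resolve_right (Nat.cast_ne_zero.mpr k.factorial_ne_zero)

def CoeffsDependOnCard (x : DualPow n) : Prop :=
  ∀ I J : Finset (Fin n), I.card = J.card → coeffAt I x = coeffAt J x

lemma mem_range_sQuotHom_iff {x : DualPow n} :
    x ∈ (sQuotHom n).range ↔ CoeffsDependOnCard x := by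
  constructor
  · intro hx I J h
    obtain ⟨a, rfl⟩ := (AlgHom.mem_range _).mp hx
    obtain ⟨p, rfl⟩ := Ideal.Quotient.mk_surjective a
    simp only [sQuotHom_mk, coeffAt_aeval_sElem, h]
  · intro hx
    rw [← ofCoeff_coeffAt x, ofCoeff, ← Finset.powerset_univ, Finset.sum_powerset]
    refine Subalgebra.sum_mem _ fun k hk => ?_
    obtain ⟨I, hI⟩ := Fin.exists_finset_card_eq (n := n) (by simpa [Nat.lt_succ_iff] using hk)
    have hsum : ∑ J ∈ Finset.powersetCard k Finset.univ, coeffAt J x • tI n J =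
        sQuotHom n (Ideal.Quotient.mk _
          (Polynomial.C (coeffAt I x / k.factorial) * Polynomial.X ^ k)) :=
      ext_coeffAt fun J => by
        rw [sQuotHom_mk, coeffAt_aeval_sElem, Polynomial.coeff_C_mul_X_pow, map_sum]
        simp only [map_smul, coeffAt_tI, smul_eq_mul, mul_ite, mul_one, mul_zero,
          Finset.sum_ite_eq', Finset.mem_powersetCard_univ]
        split_ifs with h
        · rw [hx J I (h.trans hI.symm), h,
            div_mul_cancel₀ _ (Nat.cast_ne_zero.mpr k.factorial_ne_zero)]
        · rw [zero_mul]
    exact hsum ▸ AlgHom.mem_range_self _ _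

lemma permAlg_tI (σ : Equiv.Perm (Fin n)) (I : Finset (Fin n)) :
    permAlg n σ (tI n I) = tI n (I.image σ) := by
  rw [tI, permAlg, Ideal.quotient_map_mkₐ, map_prod, tI, Ideal.Quotient.mkₐ_eq_mk,
    Finset.prod_image fun _ _ _ _ h => σ.injective h]
  simp only [rename_X]

lemma permAlg_sElem (σ : Equiv.Perm (Fin n)) : permAlg n σ (sElem n) = sElem n := by
  simp only [sElem, map_sum, permAlg_tI, Finset.image_singleton]
  exact Equiv.sum_comp σ fun j => tI n {j}

lemma coeffAt_image_permAlg (σ : Equiv.Perm (Fin n)) (J : Finset (Fin n)) (x : DualPow n) :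
    coeffAt (J.image σ) (permAlg n σ x) = coeffAt J x := by
  have key : (coeffAt (J.image σ)).comp (permAlg n σ).toLinearMap = coeffAt J :=
    LinearMap.ext_on_range span_range_tI fun I => by
      simp only [LinearMap.comp_apply, AlgHom.toLinearMap_apply, permAlg_tI, coeffAt_tI,
        (Finset.image_injective σ.injective).eq_iff]
  exact LinearMap.congr_fun key x

lemma permAlg_eq_self_iff {σ : Equiv.Perm (Fin n)} {x : DualPow n} :
    permAlg n σ x = x ↔ ∀ J, coeffAt (J.image σ) x = coeffAt J x := by
  constructor
  · intro h J
    conv_lhs => rw [← h]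
    exact coeffAt_image_permAlg σ J x
  · intro h
    refine ext_coeffAt fun K => ?_
    obtain ⟨J, rfl⟩ : ∃ J, J.image σ = K :=
      ⟨K.image σ.symm, by simp [Finset.image_image, Function.comp_def]⟩
    rw [coeffAt_image_permAlg, h]

lemma mem_invAlg_iff {G : Subgroup (Equiv.Perm (Fin n))} {x : DualPow n} :
    x ∈ invAlg n G ↔ ∀ σ ∈ G, permAlg n σ x = x := by
  simp [invAlg, Algebra.mem_iInf, AlgHom.mem_equalizer]

lemma range_sQuotHom_le_invAlg (G : Subgroup (Equiv.Perm (Fin n))) :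
    (sQuotHom n).range ≤ invAlg n G := by
  rintro _ ⟨a, rfl⟩
  refine mem_invAlg_iff.mpr fun σ _ => ?_
  have hcomm : (permAlg n σ).comp (sQuotHom n) = sQuotHom n :=
    PolyQuot.algHom_ext (by simp [sQuotHom_mk, permAlg_sElem])
  exact AlgHom.congr_fun hcomm a

lemma exists_algEquiv_iff_invAlg_le_range (G : Subgroup (Equiv.Perm (Fin n))) :
    (∃ e : PolyQuot (n + 1) ≃ₐ[ℂ] invAlg n G,
        ((e (Ideal.Quotient.mk _ Polynomial.X) : invAlg n G) : DualPow n) = sElem n) ↔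
      invAlg n G ≤ (sQuotHom n).range := by
  constructor
  · rintro ⟨e, he⟩ x hx
    have he' : (invAlg n G).val.comp (e : PolyQuot (n + 1) →ₐ[ℂ] invAlg n G) = sQuotHom n :=
      PolyQuot.algHom_ext (by simpa [sQuotHom_mk] using he)
    exact ⟨e.symm ⟨x, hx⟩, by simp [← he']⟩
  · intro h
    let f := (sQuotHom n).codRestrict (invAlg n G) fun a =>
      range_sQuotHom_le_invAlg G (AlgHom.mem_range_self _ a)
    have hf : Function.Bijective f := by
      refine ⟨fun a b hab => sQuotHom_injective (congrArg Subtype.val hab), ?_⟩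
      rintro ⟨x, hx⟩
      obtain ⟨a, rfl⟩ := (AlgHom.mem_range _).mp (h hx)
      exact ⟨a, rfl⟩
    exact ⟨AlgEquiv.ofBijective f hf, by simp [f, sQuotHom_mk]⟩

lemma forall_coeffsDependOnCard_iff (G : Subgroup (Equiv.Perm (Fin n))) :
    (∀ x ∈ invAlg n G, CoeffsDependOnCard x) ↔
      ∀ k : ℕ, 1 ≤ k → k ≤ n → ∀ I J : Finset (Fin n), I.card = k → J.card = k →
        ∃ σ ∈ G, Finset.image (⇑σ) I = J := by
  classical
  constructor
  · intro h k _ _ I J hI hJ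
    let orbitSum := ofCoeff fun K => if ∃ σ ∈ G, I.image σ = K then (1 : ℂ) else 0
    have hinv : orbitSum ∈ invAlg n G := mem_invAlg_iff.mpr fun τ hτ =>
      permAlg_eq_self_iff.mpr fun K => by
        simp only [orbitSum, coeffAt_ofCoeff]
        refine if_congr ⟨fun ⟨σ, hσ, hσK⟩ => ⟨τ⁻¹ * σ, G.mul_mem (G.inv_mem hτ) hσ, ?_⟩,
          fun ⟨σ, hσ, hσK⟩ => ⟨τ * σ, G.mul_mem hτ hσ, ?_⟩⟩ rfl rfl
        · rw [Equiv.Perm.coe_mul, ← Finset.image_image, hσK, Finset.image_image]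
          simp
        · rw [Equiv.Perm.coe_mul, ← Finset.image_image, hσK]
    have hcoeff := h orbitSum hinv I J (hI.trans hJ.symm)
    have hself : ∃ σ ∈ G, I.image σ = I := ⟨1, G.one_mem, Finset.image_id⟩
    simp only [orbitSum, coeffAt_ofCoeff, if_pos hself] at hcoeff
    by_contra hnot
    exact one_ne_zero (hcoeff.trans (if_neg hnot))
  · intro htrans x hx I J hIJ
    rcases I.card.eq_zero_or_pos with h0 | hpos
    · rw [Finset.card_eq_zero.mp h0, Finset.card_eq_zero.mp (hIJ.symm.trans h0)]
    · obtain ⟨σ, hσ, rfl⟩ := htrans _ hpos (by simpa using I.card_le_univ) I J rfl hIJ.symm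
      exact (permAlg_eq_self_iff.mp (mem_invAlg_iff.mp hx σ hσ) I).symm

end DualPow

theorem statement2_general (n : ℕ) (G : Subgroup (Equiv.Perm (Fin n))) :
    (∃ e : PolyQuot (n + 1) ≃ₐ[ℂ] invAlg n G,
        ((e (Ideal.Quotient.mk _ Polynomial.X) : invAlg n G) : DualPow n) = sElem n)
    ↔ ∀ k : ℕ, 1 ≤ k → k ≤ n → ∀ I J : Finset (Fin n), I.card = k → J.card = k →
        ∃ σ ∈ G, Finset.image (⇑σ) I = J := by
  rw [DualPow.exists_algEquiv_iff_invAlg_le_range, ← DualPow.forall_coeffsDependOnCard_iff]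
  exact forall₂_congr fun _ _ => DualPow.mem_range_sQuotHom_iff

theorem statement2 (n : ℕ) (hn : 1 ≤ n) (G : Subgroup (Equiv.Perm (Fin n))) :
    (∃ e : PolyQuot (n + 1) ≃ₐ[ℂ] invAlg n G,
        ((e (Ideal.Quotient.mk _ Polynomial.X) : invAlg n G) : DualPow n) = sElem n)
    ↔ ∀ k : ℕ, 1 ≤ k → k ≤ n → ∀ I J : Finset (Fin n), I.card = k → J.card = k →
        ∃ σ ∈ G, Finset.image (⇑σ) I = J :=
  statement2_general n G
end

section
/- For $n \geq 1$, the $S_n$-invariant subalgebra of $(\mathbb{C}[t]/(t^2))^{\otimes n}$ (with the permutation action on factors and grading where $t$ has degree $2$) is isomorphic as a graded $\mathbb{C}$-algebra to $\mathbb{C}[s]/(s^{n+1})$ with $s$ homogeneous of degree $2$. -/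
open MvPolynomial

/-! The classes `tI n I` of squarefree monomials form a basis of `DualPow n` that `Sₙ` permutes,
so the coefficients of an invariant depend only on `#I`: the invariants are spanned by the classes
`eₖ` of the elementary symmetric polynomials. The power sums `pⱼ` vanish in `DualPow n` for
`j ≥ 2`, so Newton's identities collapse to `(k + 1) eₖ₊₁ = s eₖ`, whence `sᵏ = k! eₖ`. Hence
`ℂ[X] → (DualPow n)^{Sₙ}`, `X ↦ s`, is onto, and its kernel is `(X^{n+1})` because `eₖ ≠ 0`
exactly when `k ≤ n`. -/

open Finset Module

section SquarefreeExponent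

variable {σ R : Type*} [CommSemiring R]

noncomputable def squarefreeExponent (I : Finset σ) : σ →₀ ℕ := ∑ i ∈ I, Finsupp.single i 1

theorem squarefreeExponent_apply [DecidableEq σ] (I : Finset σ) (i : σ) :
    squarefreeExponent I i = if i ∈ I then 1 else 0 := by
  simp [squarefreeExponent, Finsupp.finsetSum_apply, Finsupp.single_apply]

theorem squarefreeExponent_apply_le_one (I : Finset σ) (i : σ) : squarefreeExponent I i ≤ 1 := by
  classical
  rw [squarefreeExponent_apply]; split_ifs <;> simp

theorem squarefreeExponent_injective : Function.Injective (squarefreeExponent (σ := σ)) := by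
  classical
  intro I J h
  ext i
  have := DFunLike.congr_fun h i
  simp only [squarefreeExponent_apply] at this
  split_ifs at this <;> tauto

theorem squarefreeExponent_support_of_le_one {m : σ →₀ ℕ} (hm : ∀ i, m i ≤ 1) :
    squarefreeExponent m.support = m := by
  classical
  ext i
  have := hm i
  simp only [squarefreeExponent_apply, Finsupp.mem_support_iff]
  split_ifs <;> omega

theorem prod_X_eq_monomial_squarefreeExponent (I : Finset σ) :
    (∏ i ∈ I, X i : MvPolynomial σ R) = monomial (squarefreeExponent I) 1 :=
  (monomial_sum_one I _).symm

end SquarefreeExponent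

theorem Finset.exists_perm_image_eq {α : Type*} [DecidableEq α] {I J : Finset α}
    (h : #I = #J) : ∃ σ : Equiv.Perm α, I.image σ = J := by
  have := Set.powersetCard.isPretransitive (α := α) (n := #I)
  obtain ⟨σ, hσ⟩ := MulAction.exists_smul_eq (Equiv.Perm α)
    (⟨I, rfl⟩ : Set.powersetCard α #I) ⟨J, h.symm⟩
  exact ⟨σ, by simpa [smul_finset_def] using congrArg Subtype.val hσ⟩

theorem Subalgebra.exists_quotient_algEquiv_of_aeval {R A : Type*} [CommRing R] [Semiring A]
    [Algebra R A] (S : Subalgebra R A) {x : A} (hx : x ∈ S) (I : Ideal (Polynomial R))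
    (hker : ∀ p, Polynomial.aeval x p = 0 ↔ p ∈ I)
    (hsurj : ∀ y ∈ S, ∃ p : Polynomial R, Polynomial.aeval x p = y) :
    ∃ e : (Polynomial R ⧸ I) ≃ₐ[R] S,
      (e (Ideal.Quotient.mk I Polynomial.X) : A) = x := by
  let φ : Polynomial R →ₐ[R] S := Polynomial.aeval ⟨x, hx⟩
  have hφ (p : Polynomial R) : (φ p : A) = Polynomial.aeval x p :=
    (Polynomial.aeval_algHom_apply S.val _ p).symm
  have hI : I = RingHom.ker φ := by
    ext p
    rw [RingHom.mem_ker, ← hker, ← hφ, ZeroMemClass.coe_eq_zero]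
  have hφ_surj : Function.Surjective φ := fun ⟨y, hy⟩ =>
    let ⟨p, hp⟩ := hsurj y hy
    ⟨p, Subtype.ext ((hφ p).trans hp)⟩
  refine ⟨(Ideal.quotientEquivAlgOfEq R hI).trans
    (Ideal.quotientKerAlgEquivOfSurjective hφ_surj), ?_⟩
  have hX : Ideal.quotientKerAlgEquivOfSurjective hφ_surj (Ideal.Quotient.mk _ Polynomial.X) =
      φ Polynomial.X :=
    Ideal.kerLiftAlg_mk φ _
  rw [AlgEquiv.trans_apply, Ideal.quotientEquivAlgOfEq_mk, hX, hφ, Polynomial.aeval_X]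

section DualPow

variable {n : ℕ}

theorem mem_dualIdeal_iff {p : MvPolynomial (Fin n) ℂ} :
    p ∈ dualIdeal n ↔ ∀ m ∈ p.support, ∃ i, 2 ≤ m i := by
  have : dualIdeal n = Ideal.span ((fun m => monomial m (1 : ℂ)) ''
      Set.range fun i : Fin n => Finsupp.single i 2) := by
    simp only [dualIdeal, ← Set.range_comp, Function.comp_def, X_pow_eq_monomial]
  simp only [this, mem_ideal_span_monomial_image, Set.exists_range_iff, Finsupp.single_le_iff]

theorem coeff_squarefreeExponent_eq_zero {p : MvPolynomial (Fin n) ℂ} (hp : p ∈ dualIdeal n)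
    (I : Finset (Fin n)) : coeff (squarefreeExponent I) p = 0 := by
  by_contra h
  obtain ⟨i, hi⟩ := mem_dualIdeal_iff.mp hp _ (mem_support_iff.mpr h)
  have := squarefreeExponent_apply_le_one I i
  omega

theorem mk_monomial_squarefreeExponent (I : Finset (Fin n)) (c : ℂ) :
    Ideal.Quotient.mk (dualIdeal n) (monomial (squarefreeExponent I) c) = c • tI n I := by
  rw [tI, prod_X_eq_monomial_squarefreeExponent, ← Ideal.Quotient.mkₐ_eq_mk ℂ, ← map_smul,
    smul_monomial, smul_eq_mul, mul_one]

theorem linearIndependent_tI : LinearIndependent ℂ (tI n) := by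
  rw [Fintype.linearIndependent_iff]
  intro g hg J
  have hmem : ∑ I, monomial (squarefreeExponent I) (g I) ∈ dualIdeal n := by
    rw [← Ideal.Quotient.eq_zero_iff_mem, ← hg, map_sum]
    exact sum_congr rfl fun I _ => mk_monomial_squarefreeExponent I (g I)
  have := coeff_squarefreeExponent_eq_zero hmem J
  rwa [coeff_sum, sum_eq_single J, coeff_monomial, if_pos rfl] at this
  · intro I _ hIJ
    rw [coeff_monomial, if_neg (squarefreeExponent_injective.ne hIJ)]
  · simp

theorem mk_monomial_mem_span_tI (m : Fin n →₀ ℕ) (c : ℂ) :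
    Ideal.Quotient.mk (dualIdeal n) (monomial m c) ∈ Submodule.span ℂ (Set.range (tI n)) := by
  by_cases hm : ∀ i, m i ≤ 1
  · rw [← squarefreeExponent_support_of_le_one hm, mk_monomial_squarefreeExponent]
    exact Submodule.smul_mem _ c (Submodule.subset_span ⟨_, rfl⟩)
  · push Not at hm
    obtain ⟨i, hi⟩ := hm
    have hmem : monomial m c ∈ dualIdeal n := mem_dualIdeal_iff.mpr fun m' hm' =>
      ⟨i, by rw [mem_singleton.mp (support_monomial_subset hm')]; omega⟩
    rw [Ideal.Quotient.eq_zero_iff_mem.mpr hmem]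
    exact zero_mem _

theorem span_range_tI : Submodule.span ℂ (Set.range (tI n)) = ⊤ := by
  refine eq_top_iff.mpr fun y _ => ?_
  obtain ⟨p, rfl⟩ := Ideal.Quotient.mk_surjective y
  rw [p.as_sum, map_sum]
  exact Submodule.sum_mem _ fun m _ => mk_monomial_mem_span_tI m _

variable (n) in
noncomputable def tIBasis : Basis (Finset (Fin n)) ℂ (DualPow n) :=
  Basis.mk linearIndependent_tI span_range_tI.ge

@[simp]
theorem tIBasis_apply (I : Finset (Fin n)) : tIBasis n I = tI n I :=
  Basis.mk_apply _ _ _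

theorem tIBasis_repr_tI (I J : Finset (Fin n)) :
    (tIBasis n).repr (tI n I) J = if I = J then 1 else 0 := by
  rw [← tIBasis_apply, Basis.repr_self, Finsupp.single_apply]

theorem permAlg_tI (σ : Equiv.Perm (Fin n)) (I : Finset (Fin n)) :
    permAlg n σ (tI n I) = tI n (I.image σ) := by
  simp only [tI, permAlg, Ideal.quotient_map_mkₐ, Ideal.Quotient.mkₐ_eq_mk, map_prod, rename_X,
    prod_image fun a _ b _ h => σ.injective h]

theorem tIBasis_repr_permAlg (σ : Equiv.Perm (Fin n)) (y : DualPow n) (I : Finset (Fin n)) :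
    (tIBasis n).repr (permAlg n σ y) (I.image σ) = (tIBasis n).repr y I := by
  have : (tIBasis n).coord (I.image σ) ∘ₗ (permAlg n σ).toLinearMap = (tIBasis n).coord I :=
    (tIBasis n).ext fun J => by
      simp [permAlg_tI, tIBasis_repr_tI, (image_injective σ.injective).eq_iff]
  exact LinearMap.congr_fun this y

theorem mem_invAlg_top_iff {y : DualPow n} :
    y ∈ invAlg n ⊤ ↔ ∀ σ, permAlg n σ y = y := by
  simp [invAlg, Algebra.mem_iInf, AlgHom.mem_equalizer]

theorem tIBasis_repr_factorsThrough_card {y : DualPow n} (hy : y ∈ invAlg n ⊤) :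
    Function.FactorsThrough (fun I => (tIBasis n).repr y I) Finset.card := by
  intro I J h
  obtain ⟨σ, rfl⟩ := Finset.exists_perm_image_eq h
  simpa only [mem_invAlg_top_iff.mp hy σ] using (tIBasis_repr_permAlg σ y I).symm

theorem sElem_mem_invAlg : sElem n ∈ invAlg n ⊤ := by
  refine mem_invAlg_top_iff.mpr fun σ => ?_
  simp only [sElem, map_sum, permAlg_tI, image_singleton]
  exact Fintype.sum_equiv σ _ _ fun _ => rfl

variable (n) in
noncomputable def elemSym (k : ℕ) : DualPow n :=
  Ideal.Quotient.mk (dualIdeal n) (esymm (Fin n) ℂ k)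

theorem elemSym_eq_sum (k : ℕ) : elemSym n k = ∑ I ∈ powersetCard k univ, tI n I := by
  simp only [elemSym, esymm, map_sum, tI]

theorem tIBasis_repr_elemSym (k : ℕ) (I : Finset (Fin n)) :
    (tIBasis n).repr (elemSym n k) I = if #I = k then 1 else 0 := by
  simp [elemSym_eq_sum, tIBasis_repr_tI]

theorem elemSym_eq_zero_of_lt {k : ℕ} (hk : n < k) : elemSym n k = 0 := by
  rw [elemSym_eq_sum, powersetCard_eq_empty.mpr (by simpa using hk), sum_empty]

theorem mk_psum_eq_zero {j : ℕ} (hj : 2 ≤ j) :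
    Ideal.Quotient.mk (dualIdeal n) (psum (Fin n) ℂ j) = 0 :=
  Ideal.Quotient.eq_zero_iff_mem.mpr <| Ideal.sum_mem _ fun i _ => by
    rw [← Nat.add_sub_cancel' hj, pow_add]
    exact Ideal.mul_mem_right _ _ (Ideal.subset_span ⟨i, rfl⟩)

theorem mk_psum_one : Ideal.Quotient.mk (dualIdeal n) (psum (Fin n) ℂ 1) = sElem n := by
  simp [psum_one, sElem, tI]

theorem succ_smul_elemSym_succ (k : ℕ) :
    ((k : ℂ) + 1) • elemSym n (k + 1) = sElem n * elemSym n k := by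
  have h := congrArg (Ideal.Quotient.mk (dualIdeal n)) (mul_esymm_eq_sum (Fin n) ℂ (k + 1))
  simp only [map_mul, map_sum, map_pow, map_neg, map_one, map_natCast] at h
  rw [sum_eq_single (k, 1)] at h
  · have hsign : ((-1 : DualPow n)) ^ (k + 1 + 1) * (-1) ^ k = 1 := by
      rw [← pow_add]
      exact Even.neg_one_pow (α := DualPow n) (n := k + 1 + 1 + k) ⟨k + 1, by ring⟩
    rw [mk_psum_one, ← elemSym, ← elemSym] at h
    rw [← Nat.cast_succ, Nat.cast_smul_eq_nsmul, nsmul_eq_mul]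
    linear_combination h + elemSym n k * sElem n * hsign
  · intro b hb hne
    rw [mem_filter, HasAntidiagonal.mem_antidiagonal] at hb
    rw [mk_psum_eq_zero, mul_zero]
    contrapose! hne
    ext <;> simp <;> omega
  · simp

theorem sElem_pow (k : ℕ) : sElem n ^ k = (k.factorial : ℂ) • elemSym n k := by
  induction k with
  | zero => simp [elemSym, esymm_zero]
  | succ k ih =>
    rw [pow_succ', ih, mul_smul_comm, ← succ_smul_elemSym_succ, smul_smul, Nat.factorial_succ]
    push_cast
    ring_nf

theorem sElem_pow_succ_eq_zero : sElem n ^ (n + 1) = 0 := by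
  rw [sElem_pow, elemSym_eq_zero_of_lt n.lt_succ_self, smul_zero]

theorem tIBasis_repr_aeval_sElem (p : Polynomial ℂ) (I : Finset (Fin n)) :
    (tIBasis n).repr (Polynomial.aeval (sElem n) p) I = p.coeff #I * (#I).factorial := by
  induction p using Polynomial.induction_on' with
  | add p q hp hq => simp [hp, hq, add_mul]
  | monomial k a =>
    rw [Polynomial.aeval_monomial, sElem_pow, ← Algebra.smul_def, smul_smul, map_smul,
      Finsupp.smul_apply, tIBasis_repr_elemSym, Polynomial.coeff_monomial]
    by_cases h : #I = k
    · simp [h]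
    · simp [h, Ne.symm h]

theorem aeval_sElem_eq_zero_iff (p : Polynomial ℂ) :
    Polynomial.aeval (sElem n) p = 0 ↔ Polynomial.X ^ (n + 1) ∣ p := by
  constructor
  · intro hp
    refine Polynomial.X_pow_dvd_iff.mpr fun d hd => ?_
    obtain ⟨I, -, hI⟩ := exists_subset_card_eq (s := (univ : Finset (Fin n))) (n := d)
      (by simpa [Nat.lt_succ_iff] using hd)
    have := tIBasis_repr_aeval_sElem p I
    rw [hp, map_zero, Finsupp.zero_apply, hI] at this
    exact (mul_eq_zero.mp this.symm).resolve_right (Nat.cast_ne_zero.mpr d.factorial_ne_zero)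
  · rintro ⟨q, rfl⟩
    rw [map_mul, map_pow, Polynomial.aeval_X, sElem_pow_succ_eq_zero, zero_mul]

theorem exists_aeval_sElem_eq {y : DualPow n} (hy : y ∈ invAlg n ⊤) :
    ∃ p : Polynomial ℂ, Polynomial.aeval (sElem n) p = y := by
  let c := Function.extend Finset.card (fun I => (tIBasis n).repr y I) 0
  refine ⟨∑ k ∈ range (n + 1), Polynomial.C (c k / k.factorial) * Polynomial.X ^ k,
    (tIBasis n).ext_elem fun I => ?_⟩
  have hI : #I < n + 1 := Nat.lt_succ_of_le ((card_le_univ I).trans_eq (Fintype.card_fin n))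
  rw [tIBasis_repr_aeval_sElem, Polynomial.finsetSum_coeff, sum_eq_single #I,
    Polynomial.coeff_C_mul_X_pow, if_pos rfl,
    div_mul_cancel₀ _ (Nat.cast_ne_zero.mpr (#I).factorial_ne_zero)]
  · exact (tIBasis_repr_factorsThrough_card hy).extend_apply _ I
  · intro k _ hk
    rw [Polynomial.coeff_C_mul_X_pow, if_neg (Ne.symm hk)]
  · simp [hI]

end DualPow

theorem statement3_general (n : ℕ) :
    ∃ e : PolyQuot (n + 1) ≃ₐ[ℂ] invAlg n (⊤ : Subgroup (Equiv.Perm (Fin n))),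
      ((e (Ideal.Quotient.mk _ Polynomial.X) :
          invAlg n (⊤ : Subgroup (Equiv.Perm (Fin n)))) : DualPow n) = sElem n :=
  Subalgebra.exists_quotient_algEquiv_of_aeval _ sElem_mem_invAlg _
    (fun p => (aeval_sElem_eq_zero_iff p).trans Ideal.mem_span_singleton.symm)
    fun _ => exists_aeval_sElem_eq

theorem statement3 (n : ℕ) (hn : 1 ≤ n) :
    ∃ e : PolyQuot (n + 1) ≃ₐ[ℂ] invAlg n (⊤ : Subgroup (Equiv.Perm (Fin n))),
      ((e (Ideal.Quotient.mk _ Polynomial.X) :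
          invAlg n (⊤ : Subgroup (Equiv.Perm (Fin n)))) : DualPow n) = sElem n :=
  statement3_general n
end
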